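/- Fix H ∈ (0,1) and define β_H(n) = 2^{2Hn}·(2^{−2Hn} + 1 − (1 − 2^{−n})^{2H})² for integers n ≥ 0. Then β_H(n) > 0 for every n ≥ 0, and there exists C > 0 such that β_H(n) ≤ C·2^{−2·min(H,1−H)·n} for all n ≥ 0; in particular, the series Σ_{n≥0} β_H(n) converges. -/
import Mathlib


/-- The correlation `B(n) = E ξ₀ ξ_n` (up to normalization) of the stationary sequence
`ξ_n = 4 x(2ⁿ, 2^{−n})` for the fractional Brownian sheet `x` of index `H`:
`β_H(n) = 2^{2Hn} (2^{−2Hn} + 1 − (1 − 2^{−n})^{2H})²`. -/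
noncomputable def betaH (H : ℝ) (n : ℕ) : ℝ :=
  (2:ℝ) ^ (2*H*(n:ℝ)) *
    ((2:ℝ) ^ (-(2*H*(n:ℝ))) + 1 - (1 - (2:ℝ) ^ (-(n:ℝ))) ^ (2*H)) ^ 2

/-- Subadditivity of `x ↦ x^p` for `0 ≤ p ≤ 1` applied to `1 = (1-x)+x`. -/
lemma one_le_rpow_add_rpow {x p : ℝ} (hx0 : 0 ≤ x) (hx1 : x ≤ 1)
    (hp0 : 0 ≤ p) (hp1 : p ≤ 1) :
    1 ≤ (1 - x) ^ p + x ^ p := by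
  have h1x : 0 ≤ 1 - x := by linarith
  have h := NNReal.rpow_add_le_add_rpow (1 - x).toNNReal x.toNNReal hp0 hp1
  have hsum : (1 - x).toNNReal + x.toNNReal = 1 := by
    rw [← Real.toNNReal_add h1x hx0]
    norm_num
  rw [hsum, NNReal.one_rpow] at h
  have hco := NNReal.coe_le_coe.2 h
  rw [NNReal.coe_one, NNReal.coe_add, NNReal.coe_rpow, NNReal.coe_rpow,
    Real.coe_toNNReal _ h1x, Real.coe_toNNReal _ hx0] at hco
  exact hco

/-- `β_H(n) > 0` for all `n ≥ 0`; `β_H(n) ≤ C·2^{−2 min(H,1−H) n}` for some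
`C > 0`; in particular `Σ_{n≥0} β_H(n)` converges. -/
theorem statement18 (H : ℝ) (hH : H ∈ Set.Ioo (0:ℝ) 1) :
    (∀ n : ℕ, 0 < betaH H n) ∧
    (∃ C > (0:ℝ), ∀ n : ℕ, betaH H n ≤ C * (2:ℝ) ^ (-(2 * min H (1-H) * (n:ℝ)))) ∧
    Summable (fun n : ℕ => betaH H n) := by
  obtain ⟨hH0, hH1⟩ := hH
  have hbpos : ∀ n : ℕ, 0 < betaH H n := by
    intro n
    have hx0 : (0:ℝ) < (2:ℝ) ^ (-(n:ℝ)) := Real.rpow_pos_of_pos two_pos _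
    have hx1 : (2:ℝ) ^ (-(n:ℝ)) ≤ 1 :=
      Real.rpow_le_one_of_one_le_of_nonpos one_le_two (neg_nonpos.2 (Nat.cast_nonneg n))
    have h1 : (1 - (2:ℝ) ^ (-(n:ℝ))) ^ (2*H) < 1 :=
      Real.rpow_lt_one (by linarith) (by linarith) (by linarith)
    have h2 : (0:ℝ) < (2:ℝ) ^ (-(2*H*(n:ℝ))) := Real.rpow_pos_of_pos two_pos _
    have hinner : 0 < (2:ℝ) ^ (-(2*H*(n:ℝ))) + 1 - (1 - (2:ℝ) ^ (-(n:ℝ))) ^ (2*H) := by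
      linarith
    have h3 : (0:ℝ) < (2:ℝ) ^ (2*H*(n:ℝ)) := Real.rpow_pos_of_pos two_pos _
    exact mul_pos h3 (pow_pos hinner 2)
  have key : ∀ n : ℕ, betaH H n ≤ 9 * (2:ℝ) ^ (-(2 * min H (1-H) * (n:ℝ))) := by
    intro n
    set t : ℝ := (n:ℝ) with ht
    have ht0 : (0:ℝ) ≤ t := Nat.cast_nonneg n
    set x : ℝ := (2:ℝ) ^ (-t) with hxdef
    have hx0 : 0 < x := Real.rpow_pos_of_pos two_pos _
    have hx1 : x ≤ 1 :=
      Real.rpow_le_one_of_one_le_of_nonpos one_le_two (by linarith)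
    have hxa : x ^ (2*H) = (2:ℝ) ^ (-(2*H*t)) := by
      rw [hxdef, ← Real.rpow_mul (by norm_num)]
      congr 1; ring
    have hxb : x ^ (-(2*H)) = (2:ℝ) ^ (2*H*t) := by
      rw [hxdef, ← Real.rpow_mul (by norm_num)]
      congr 1; ring
    have hbeq : betaH H n = x ^ (-(2*H)) * (x ^ (2*H) + 1 - (1-x) ^ (2*H)) ^ 2 := by
      rw [betaH, hxa, hxb]
    have h1x : 0 ≤ 1 - x := by linarith
    have hIlt : (1 - x) ^ (2*H) ≤ 1 :=
      Real.rpow_le_one h1x (by linarith) (by linarith)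
    have hxp : 0 < x ^ (2*H) := Real.rpow_pos_of_pos hx0 _
    have hI0 : 0 ≤ x ^ (2*H) + 1 - (1-x) ^ (2*H) := by linarith
    rcases le_or_gt H (1/2) with hc | hc
    · -- H ≤ 1/2 : min = H
      have hmin : min H (1-H) = H := min_eq_left (by linarith)
      have hsub : 1 ≤ (1 - x) ^ (2*H) + x ^ (2*H) :=
        one_le_rpow_add_rpow hx0.le hx1 (by linarith) (by linarith)
      have hIle : x ^ (2*H) + 1 - (1-x) ^ (2*H) ≤ 2 * x ^ (2*H) := by linarith
      have hsq : (x ^ (2*H) + 1 - (1-x) ^ (2*H)) ^ 2 ≤ (2 * x ^ (2*H)) ^ 2 := by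
        apply pow_le_pow_left₀ hI0 hIle
      have h2 : betaH H n ≤ x ^ (-(2*H)) * (2 * x ^ (2*H)) ^ 2 := by
        rw [hbeq]
        exact mul_le_mul_of_nonneg_left hsq (Real.rpow_pos_of_pos hx0 _).le
      have h3 : x ^ (-(2*H)) * (2 * x ^ (2*H)) ^ 2 = 4 * x ^ (2*H) := by
        have : x ^ (-(2*H)) * (x ^ (2*H) * x ^ (2*H)) = x ^ (2*H) := by
          rw [← Real.rpow_add hx0, ← Real.rpow_add hx0]
          congr 1; ring
        calc x ^ (-(2*H)) * (2 * x ^ (2*H)) ^ 2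
            = 4 * (x ^ (-(2*H)) * (x ^ (2*H) * x ^ (2*H))) := by ring
          _ = 4 * x ^ (2*H) := by rw [this]
      have h4 : x ^ (2*H) = (2:ℝ) ^ (-(2 * min H (1-H) * t)) := by
        rw [hmin, hxa]
      have hfin : betaH H n ≤ 4 * (2:ℝ) ^ (-(2 * min H (1-H) * t)) := by
        rw [← h4]; linarith [h2, h3.le]
      have hp : (0:ℝ) < (2:ℝ) ^ (-(2 * min H (1-H) * t)) :=
        Real.rpow_pos_of_pos two_pos _
      linarith
    · -- H > 1/2 : min = 1 - H
      have hmin : min H (1-H) = 1 - H := min_eq_right (by linarith)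
      have hbern : 1 + (2*H) * (-x) ≤ (1 + (-x)) ^ (2*H) :=
        one_add_mul_self_le_rpow_one_add (by linarith) (by linarith)
      have hb' : 1 - (1-x) ^ (2*H) ≤ 2 * x := by
        have : (1 + (-x)) = 1 - x := by ring
        rw [this] at hbern
        nlinarith [hx0.le]
      have hxle : x ^ (2*H) ≤ x := by
        have := Real.rpow_le_rpow_of_exponent_ge hx0 hx1 (show (1:ℝ) ≤ 2*H by linarith)
        rwa [Real.rpow_one] at this
      have hIle : x ^ (2*H) + 1 - (1-x) ^ (2*H) ≤ 3 * x := by linarith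
      have hsq : (x ^ (2*H) + 1 - (1-x) ^ (2*H)) ^ 2 ≤ (3 * x) ^ 2 :=
        pow_le_pow_left₀ hI0 hIle 2
      have h2 : betaH H n ≤ x ^ (-(2*H)) * (3 * x) ^ 2 := by
        rw [hbeq]
        exact mul_le_mul_of_nonneg_left hsq (Real.rpow_pos_of_pos hx0 _).le
      have h3 : x ^ (-(2*H)) * (3 * x) ^ 2 = 9 * x ^ (2 - 2*H) := by
        have hx' : x = x ^ (1:ℝ) := (Real.rpow_one x).symm
        have : x ^ (-(2*H)) * (x ^ (1:ℝ) * x ^ (1:ℝ)) = x ^ (2 - 2*H) := by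
          rw [← Real.rpow_add hx0, ← Real.rpow_add hx0]
          congr 1; ring
        calc x ^ (-(2*H)) * (3 * x) ^ 2
            = 9 * (x ^ (-(2*H)) * (x ^ (1:ℝ) * x ^ (1:ℝ))) := by
              rw [Real.rpow_one]; ring
          _ = 9 * x ^ (2 - 2*H) := by rw [this]
      have h4 : x ^ (2 - 2*H) = (2:ℝ) ^ (-(2 * min H (1-H) * t)) := by
        rw [hmin, hxdef, ← Real.rpow_mul (by norm_num)]
        congr 1; ring
      rw [← h4]
      linarith [h2, h3.le]
  refine ⟨hbpos, ⟨9, by norm_num, key⟩, ?_⟩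
  set m : ℝ := min H (1-H) with hm
  have hm0 : 0 < m := lt_min (by linarith) (by linarith)
  set r : ℝ := (2:ℝ) ^ (-(2*m)) with hr
  have hr0 : 0 < r := Real.rpow_pos_of_pos two_pos _
  have hr1 : r < 1 :=
    Real.rpow_lt_one_of_one_lt_of_neg one_lt_two (by linarith)
  have hgeo : Summable (fun n : ℕ => 9 * r ^ n) :=
    (summable_geometric_of_lt_one hr0.le hr1).mul_left 9
  refine Summable.of_nonneg_of_le (fun n => (hbpos n).le) (fun n => ?_) hgeo
  have : r ^ n = (2:ℝ) ^ (-(2 * m * (n:ℝ))) := by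
    rw [hr, ← Real.rpow_natCast ((2:ℝ) ^ (-(2*m))) n,
      ← Real.rpow_mul (by norm_num)]
    congr 1; ring
  rw [this]
  exact key n
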